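/- Let n ∈ ℕ, 1 ≤ q ≤ ∞, x ∈ [a,b], and p integrable on [a,b]. Then sup over f ∈ W^n_q[a,b] of |∫_a^b p(t) f(t) dt − Σ_{k=0}^{n−1} (1/k!)(∫_a^b p(t)(t−x)^k dt) f^{(k)}(x)| equals ‖r_x^n‖_{L_{q′}[a,b]}, where 1/q + 1/q′ = 1. -/

import Mathlib

open MeasureTheory intervalIntegral ENNReal

/-- The kernels `r_x^k`: `r_x^0 = p` and
`r_x^{k+1}(s) = −∫_a^s r_x^k` for `s ≤ x`, `∫_s^b r_x^k` for `s ≥ x`. -/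
noncomputable def rk (a b x : ℝ) (p : ℝ → ℝ) : ℕ → ℝ → ℝ
  | 0 => p
  | k + 1 => fun s =>
      if s ≤ x then -(∫ t in a..s, rk a b x p k t)
      else ∫ t in s..b, rk a b x p k t

/-!
Integrating by parts against the kernels (each step is Fubini, plus the fact that `rk (k+1)` is
the tail integral of `rk k` with a jump of size `∫ rk k` at `x`) turns the deviation
`∫ p f - Σ_{k<n} (1/k!) (∫ p (t-x)^k) f^{(k)}(x)` into `∫ rk n * f^{(n)}`; the same computation
with `f = (t-x)^k` shows `∫ p (t-x)^k = k! ∫ rk k`. Every `L_q` function is the `n`-th derivative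
of its `n`-fold primitive, so the supremum is that of `|∫ rk n * g|` over the unit ball of
`L_q[a,b]`, which is `‖rk n‖_{q'}` because `rk n` is bounded for `n ≥ 1`: Hölder gives `≤`, and
near-extremal `g` are `sign (rk n)` for `q = ∞`, a multiple of `sign (rk n) |rk n|^{q'-1}` for
`1 < q < ∞`, and for `q = 1` a multiple of `sign (rk n)` on a set where `|rk n|` nearly attains
its essential supremum.
-/

open Set

namespace Real

lemma measurable_sign : Measurable Real.sign :=
  Measurable.ite (measurableSet_lt measurable_id measurable_const) measurable_const
    (Measurable.ite (measurableSet_lt measurable_const measurable_id) measurable_const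
      measurable_const)

lemma abs_sign_le_one (y : ℝ) : |Real.sign y| ≤ 1 := by
  rcases Real.sign_apply_eq y with h | h | h <;> simp [h]

lemma self_mul_sign (y : ℝ) : y * Real.sign y = |y| := by
  rcases lt_trichotomy y 0 with h | rfl | h
  · simp [Real.sign_of_neg h, abs_of_neg h]
  · simp
  · simp [Real.sign_of_pos h, abs_of_pos h]

end Real

section Duality

variable {α : Type*} [MeasurableSpace α] {μ : Measure α} {q q' : ℝ≥0∞} {r g : α → ℝ}

lemma abs_integral_mul_le_of_eLpNorm_le_one [HolderConjugate q q'] (hr : MemLp r q' μ)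
    (hg : AEStronglyMeasurable g μ) (hgq : eLpNorm g q μ ≤ 1) :
    |∫ w, r w * g w ∂μ| ≤ (eLpNorm r q' μ).toReal := by
  have hHolder : eLpNorm (fun w => r w * g w) 1 μ ≤ eLpNorm r q' μ * eLpNorm g q μ := by
    simpa using eLpNorm_le_eLpNorm_mul_eLpNorm'_of_norm hr.1 hg (· * ·) 1
      (.of_forall fun w => by simp [norm_mul])
  have hle : ‖∫ w, r w * g w ∂μ‖ₑ ≤ eLpNorm r q' μ :=
    calc ‖∫ w, r w * g w ∂μ‖ₑ ≤ eLpNorm (fun w => r w * g w) 1 μ := by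
          rw [eLpNorm_one_eq_lintegral_enorm]; exact enorm_integral_le_lintegral_enorm _
      _ ≤ eLpNorm r q' μ * 1 := hHolder.trans (by gcongr)
      _ = eLpNorm r q' μ := mul_one _
  simpa [Real.enorm_eq_ofReal_abs] using ENNReal.toReal_mono hr.2.ne hle

lemma exists_integral_mul_eq_eLpNorm_one (hr : Measurable r) :
    ∃ g : α → ℝ, Measurable g ∧ eLpNorm g ∞ μ ≤ 1 ∧
      ∫ w, r w * g w ∂μ = (eLpNorm r 1 μ).toReal := by
  refine ⟨fun w => Real.sign (r w), Real.measurable_sign.comp hr, ?_, ?_⟩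
  · rw [eLpNorm_exponent_top]
    simpa using eLpNormEssSup_le_of_ae_bound (μ := μ) (C := 1)
      (.of_forall fun w => (Real.abs_sign_le_one (r w)))
  · simp_rw [Real.self_mul_sign, ← Real.norm_eq_abs, eLpNorm_one_eq_lintegral_enorm]
    exact integral_norm_eq_lintegral_enorm hr.aestronglyMeasurable

lemma eLpNorm_indicator_sign_div_measureReal_le {E : Set α} (hE : MeasurableSet E)
    (hE₀ : μ E ≠ 0) (hE_fin : μ E ≠ ∞) :
    eLpNorm (E.indicator fun w => Real.sign (r w) / μ.real E) 1 μ ≤ 1 := by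
  have hE_real : 0 < μ.real E := toReal_pos hE₀ hE_fin
  calc eLpNorm (E.indicator fun w => Real.sign (r w) / μ.real E) 1 μ
      ≤ eLpNorm (E.indicator fun _ => (μ.real E)⁻¹) 1 μ := by
        refine eLpNorm_mono fun w => ?_
        by_cases hw : w ∈ E
        · simp only [indicator_of_mem hw, Real.norm_eq_abs, abs_div, abs_inv, abs_of_pos hE_real]
          exact div_le_div_of_nonneg_right (Real.abs_sign_le_one _) hE_real.le |>.trans_eq
            (one_div _)
        · simp [indicator_of_notMem hw]
    _ = 1 := by
        rw [eLpNorm_indicator_const hE one_ne_zero one_ne_top, ← ofReal_norm, Real.norm_eq_abs,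
          abs_inv, abs_of_pos hE_real, ofReal_inv_of_pos hE_real, measureReal_def,
          ofReal_toReal hE_fin]
        simpa using ENNReal.inv_mul_cancel hE₀ hE_fin

lemma exists_lt_integral_mul_of_lt_eLpNorm_top [IsFiniteMeasure μ] (hr : Measurable r) {c : ℝ}
    (hc₀ : 0 ≤ c) (hc : c < (eLpNorm r ∞ μ).toReal) :
    ∃ g : α → ℝ, Measurable g ∧ eLpNorm g 1 μ ≤ 1 ∧ c < ∫ w, r w * g w ∂μ := by
  have hfin : eLpNorm r ∞ μ ≠ ∞ := fun h => by simp [h] at hc; linarith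
  obtain ⟨d, hcd, hd⟩ := exists_between ((ofReal_lt_iff_lt_toReal hc₀ hfin).2 hc)
  have hd_fin : d ≠ ∞ := (hd.trans_le le_top).ne
  set E := {w | d < ‖r w‖ₑ}
  have hE : MeasurableSet E := measurableSet_lt measurable_const hr.enorm
  have hE_pos : μ E ≠ 0 := by
    intro h
    refine (hd.trans_le ?_).false
    rw [eLpNorm_exponent_top]
    exact essSup_le_of_ae_le d (measure_eq_zero_iff_ae_notMem.1 h |>.mono fun w hw => not_lt.1 hw)
  have hE_real : 0 < μ.real E := ENNReal.toReal_pos hE_pos (measure_ne_top μ E)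
  refine ⟨E.indicator fun w => Real.sign (r w) / μ.real E,
    ((Real.measurable_sign.comp hr).div_const _).indicator hE, ?_, ?_⟩
  · exact eLpNorm_indicator_sign_div_measureReal_le hE hE_pos (measure_ne_top μ E)
  · have hint : IntegrableOn (fun w => |r w|) E μ :=
      (MemLp.integrable le_top ⟨hr.aestronglyMeasurable, hfin.lt_top⟩).abs.integrableOn
    have hge : μ.real E * d.toReal ≤ ∫ w in E, |r w| ∂μ :=
      setIntegral_ge_of_const_le hE (measure_ne_top μ E)
        (fun w hw => by simpa using toReal_mono enorm_ne_top (le_of_lt hw)) hint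
    have hpt : (fun w => r w * E.indicator (fun w => Real.sign (r w) / μ.real E) w) =
        E.indicator fun w => |r w| / μ.real E := by
      ext w
      by_cases hw : w ∈ E <;> simp [hw, ← mul_div_assoc, Real.self_mul_sign]
    rw [hpt, MeasureTheory.integral_indicator hE, MeasureTheory.integral_div, lt_div_iff₀ hE_real]
    calc c * μ.real E < d.toReal * μ.real E := by
          gcongr; exact (ofReal_lt_iff_lt_toReal hc₀ hd_fin).1 hcd
      _ ≤ _ := by rwa [mul_comm]

lemma integral_rpow_div_eLpNorm_eq_one {s : ℝ≥0∞} (hs₀ : s ≠ 0) (hs : s ≠ ∞) (hr : MemLp r s μ)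
    (hN : eLpNorm r s μ ≠ 0) :
    ∫ w, (|r w| / (eLpNorm r s μ).toReal) ^ s.toReal ∂μ = 1 := by
  have hN_pos : 0 < (eLpNorm r s μ).toReal := toReal_pos hN hr.2.ne
  have hint : 0 ≤ ∫ w, |r w| ^ s.toReal ∂μ := integral_nonneg fun w => by positivity
  have hNs : ∫ w, |r w| ^ s.toReal ∂μ = (eLpNorm r s μ).toReal ^ s.toReal := by
    simp only [hr.eLpNorm_eq_integral_rpow_norm hs₀ hs, Real.norm_eq_abs]
    rw [toReal_ofReal (by positivity), Real.rpow_inv_rpow hint (toReal_ne_zero.2 ⟨hs₀, hs⟩)]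
  simp_rw [Real.div_rpow (abs_nonneg _) hN_pos.le]
  rw [MeasureTheory.integral_div, hNs, div_self (by positivity)]

lemma exists_integral_mul_eq_eLpNorm [IsFiniteMeasure μ] [HolderConjugate q q'] (hq : q ≠ ∞)
    (hq' : q' ≠ ∞) (hr : Measurable r) {M : ℝ} (hM : ∀ᵐ w ∂μ, |r w| ≤ M)
    (hN : eLpNorm r q' μ ≠ 0) :
    ∃ g : α → ℝ, Measurable g ∧ eLpNorm g q μ ≤ 1 ∧
      ∫ w, r w * g w ∂μ = (eLpNorm r q' μ).toReal := by
  have hts : q.toReal.HolderConjugate q'.toReal := HolderConjugate.toReal_of_ne_top hq hq'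
  set s := q'.toReal
  have hs₀ : s ≠ 0 := hts.symm.ne_zero
  have hrLp : MemLp r q' μ :=
    (memLp_top_of_bound hr.aestronglyMeasurable M (by simpa using hM)).mono_exponent le_top
  set N := (eLpNorm r q' μ).toReal
  have hN_pos : 0 < N := toReal_pos hN hrLp.2.ne
  have hunit : ∫ w, (|r w| / N) ^ s ∂μ = 1 :=
    integral_rpow_div_eLpNorm_eq_one (HolderConjugate.ne_zero q' q) hq' hrLp hN
  set g : α → ℝ := fun w => Real.sign (r w) * (|r w| / N) ^ (s - 1)
  have hg : Measurable g :=
    (Real.measurable_sign.comp hr).mul ((hr.abs.div_const N).pow_const (s - 1))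
  have hs₁ : 0 < s - 1 := hts.symm.sub_one_pos
  have hg_abs : ∀ w, |g w| = (|r w| / N) ^ (s - 1) := by
    intro w
    rcases eq_or_ne (r w) 0 with h | h
    · simp [g, h, Real.zero_rpow hs₁.ne']
    · rcases Real.sign_apply_eq_of_ne_zero _ h with h' | h' <;>
        simp [g, h', abs_of_nonneg (by positivity : 0 ≤ (|r w| / N) ^ (s - 1))]
  have hg_bound : ∀ᵐ w ∂μ, ‖g w‖ ≤ (max M 0 / N) ^ (s - 1) := by
    filter_upwards [hM] with w hw
    rw [Real.norm_eq_abs, hg_abs]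
    gcongr
    exact hw.trans (le_max_left _ _)
  have hg_pow : ∀ w, |g w| ^ q.toReal = (|r w| / N) ^ s := fun w => by
    rw [hg_abs, ← Real.rpow_mul (by positivity), hts.symm.sub_one_mul_conj]
  have hrg : ∀ w, r w * g w = N * (|r w| / N) ^ s := fun w => by
    calc r w * g w = N * (|r w| / N) * (|r w| / N) ^ (s - 1) := by
          simp only [g, ← mul_assoc, Real.self_mul_sign, mul_div_cancel₀ _ hN_pos.ne']
      _ = N * (|r w| / N) ^ s := by
          rw [mul_assoc, ← Real.rpow_one_add' (by positivity) (by simpa using hs₀)]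
          ring_nf
  refine ⟨g, hg, ?_, ?_⟩
  · have hgLp : MemLp g q μ :=
      (memLp_top_of_bound hg.aestronglyMeasurable _ hg_bound).mono_exponent le_top
    rw [hgLp.eLpNorm_eq_integral_rpow_norm (HolderConjugate.ne_zero q q') hq]
    simp only [Real.norm_eq_abs, hg_pow, hunit, Real.one_rpow, ofReal_one, le_refl]
  · simp [hrg, MeasureTheory.integral_const_mul, hunit]

lemma exists_lt_integral_mul_of_lt_eLpNorm [IsFiniteMeasure μ] [HolderConjugate q q']
    (hr : AEStronglyMeasurable r μ) {M : ℝ} (hM : ∀ᵐ w ∂μ, |r w| ≤ M) {c : ℝ}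
    (hc : c < (eLpNorm r q' μ).toReal) :
    ∃ g : α → ℝ, AEStronglyMeasurable g μ ∧ eLpNorm g q μ ≤ 1 ∧ c < ∫ w, r w * g w ∂μ := by
  rcases lt_or_ge c 0 with hc₀ | hc₀
  · exact ⟨0, aestronglyMeasurable_zero, by simp, by simpa using hc₀⟩
  set r' := hr.mk r
  have hr' : Measurable r' := hr.stronglyMeasurable_mk.measurable
  have hae : r =ᵐ[μ] r' := hr.ae_eq_mk
  rw [eLpNorm_congr_ae hae] at hc
  suffices ∃ g : α → ℝ, Measurable g ∧ eLpNorm g q μ ≤ 1 ∧ c < ∫ w, r' w * g w ∂μ by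
    obtain ⟨g, hg, hgq, hlt⟩ := this
    refine ⟨g, hg.aestronglyMeasurable, hgq, hlt.trans_eq (integral_congr_ae ?_)⟩
    filter_upwards [hae] with w hw
    rw [hw]
  rcases eq_or_ne q' 1 with rfl | hq'₁
  · obtain rfl : q = ∞ := (HolderConjugate.eq_top_iff_eq_one q 1).2 rfl
    obtain ⟨g, hg, hgq, heq⟩ := exists_integral_mul_eq_eLpNorm_one (μ := μ) hr'
    exact ⟨g, hg, hgq, heq ▸ hc⟩
  rcases eq_or_ne q' ∞ with rfl | hq'
  · obtain rfl : q = 1 := (HolderConjugate.eq_top_iff_eq_one ∞ q).1 rfl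
    exact exists_lt_integral_mul_of_lt_eLpNorm_top hr' hc₀ hc
  have hN : eLpNorm r' q' μ ≠ 0 := fun h => by simp [h] at hc; linarith
  obtain ⟨g, hg, hgq, heq⟩ := exists_integral_mul_eq_eLpNorm
    ((HolderConjugate.ne_top_iff_ne_one q q').2 hq'₁) hq' hr'
    (by filter_upwards [hM, hae] with w hw hw'; rwa [← hw']) hN
  exact ⟨g, hg, hgq, heq ▸ hc⟩

theorem sSup_abs_integral_mul_eq_eLpNorm [IsFiniteMeasure μ] [HolderConjugate q q']
    (hr : AEStronglyMeasurable r μ) {M : ℝ} (hM : ∀ᵐ w ∂μ, |r w| ≤ M) :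
    sSup {v : ℝ | ∃ g : α → ℝ, AEStronglyMeasurable g μ ∧ eLpNorm g q μ ≤ 1 ∧
      v = |∫ w, r w * g w ∂μ|} = (eLpNorm r q' μ).toReal := by
  have hrLp : MemLp r q' μ :=
    (memLp_top_of_bound hr M (by simpa using hM)).mono_exponent le_top
  refine csSup_eq_of_forall_le_of_forall_lt_exists_gt
    ⟨0, 0, aestronglyMeasurable_zero, by simp, by simp⟩ ?_ fun c hc => ?_
  · rintro _ ⟨g, hg, hgq, rfl⟩
    exact abs_integral_mul_le_of_eLpNorm_le_one hrLp hg hgq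
  · obtain ⟨g, hg, hgq, hlt⟩ := exists_lt_integral_mul_of_lt_eLpNorm (q := q) hr hM hc
    exact ⟨_, ⟨g, hg, hgq, rfl⟩, hlt.trans_le (le_abs_self _)⟩

end Duality

lemma integral_mul_primitive_eq_integral_tail_mul {a b : ℝ} {f g : ℝ → ℝ} (hab : a ≤ b)
    (hf : IntervalIntegrable f volume a b) (hg : IntervalIntegrable g volume a b) :
    ∫ s in a..b, f s * ∫ t in a..s, g t = ∫ t in a..b, (∫ s in t..b, f s) * g t := by
  set μ := volume.restrict (Ioc a b)
  set F : ℝ × ℝ → ℝ := {z | z.2 ≤ z.1}.indicator fun z => f z.1 * g z.2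
  have hF : Integrable F (μ.prod μ) :=
    (((intervalIntegrable_iff_integrableOn_Ioc_of_le hab).1 hf).mul_prod
      ((intervalIntegrable_iff_integrableOn_Ioc_of_le hab).1 hg)).indicator
      (measurableSet_le measurable_snd measurable_fst)
  have hinner₁ : ∀ s ∈ Ioc a b, ∫ t, F (s, t) ∂μ = f s * ∫ t in a..s, g t := by
    intro s hs
    have : (fun t => F (s, t)) = {t | t ≤ s}.indicator fun t => f s * g t := by
      ext t; simp [F, indicator_apply]
    rw [this, ← integral_of_le hab, intervalIntegral.integral_indicator ⟨hs.1.le, hs.2⟩,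
      intervalIntegral.integral_const_mul]
  have hinner₂ : ∀ t ∈ Ioc a b, ∫ s, F (s, t) ∂μ = (∫ s in t..b, f s) * g t := by
    intro t ht
    have hset : Ioc a b ∩ Ici t = Icc t b := by
      ext s; simp only [mem_inter_iff, mem_Ioc, mem_Ici, mem_Icc]
      exact ⟨fun h => ⟨h.2, h.1.2⟩, fun h => ⟨⟨ht.1.trans_le h.1, h.2⟩, h.1⟩⟩
    have : (fun s => F (s, t)) = (Ici t).indicator fun s => f s * g t := by
      ext s; simp [F, indicator_apply]
    rw [this, setIntegral_indicator measurableSet_Ici, hset, integral_Icc_eq_integral_Ioc,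
      ← integral_of_le ht.2, intervalIntegral.integral_mul_const]
  rw [integral_of_le hab, integral_of_le hab,
    ← setIntegral_congr_fun measurableSet_Ioc hinner₁,
    ← setIntegral_congr_fun measurableSet_Ioc hinner₂]
  exact integral_integral_swap hF

lemma IntervalIntegrable.indicator_setOf_le {a b x : ℝ} {f : ℝ → ℝ}
    (hf : IntervalIntegrable f volume a b) :
    IntervalIntegrable ({t | t ≤ x}.indicator f) volume a b :=
  intervalIntegrable_iff.2 ((intervalIntegrable_iff.1 hf).indicator measurableSet_Iic)

lemma IntervalIntegrable.continuousOn_integral_tail {a b : ℝ} {f : ℝ → ℝ}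
    (hf : IntervalIntegrable f volume a b) :
    ContinuousOn (fun s => ∫ t in s..b, f t) (uIcc a b) := by
  simp_rw [integral_symm b, ← uIcc_comm b a]
  exact (continuousOn_primitive_interval' hf.symm left_mem_uIcc).neg

noncomputable def iteratedPrimitive (a : ℝ) (g : ℝ → ℝ) : ℕ → ℝ → ℝ
  | 0 => g
  | m + 1 => fun y => ∫ t in a..y, iteratedPrimitive a g m t

lemma intervalIntegrable_iteratedPrimitive {a b : ℝ} {g : ℝ → ℝ}
    (hg : IntervalIntegrable g volume a b) :
    ∀ m, IntervalIntegrable (iteratedPrimitive a g m) volume a b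
  | 0 => hg
  | m + 1 => (continuousOn_primitive_interval'
      (intervalIntegrable_iteratedPrimitive hg m) left_mem_uIcc).intervalIntegrable

lemma exists_iteratedDerivs_of_intervalIntegrable {a b : ℝ} {g : ℝ → ℝ}
    (hg : IntervalIntegrable g volume a b) (n : ℕ) :
    ∃ fd : ℕ → ℝ → ℝ, (∀ k < n, IntervalIntegrable (fd (k + 1)) volume a b) ∧
      (∀ k < n, ∀ y, fd k y = fd k a + ∫ t in a..y, fd (k + 1) t) ∧ fd n = g := by
  refine ⟨fun k => iteratedPrimitive a g (n - k),
    fun k _ => intervalIntegrable_iteratedPrimitive hg _, fun k hk y => ?_,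
    by simp [iteratedPrimitive]⟩
  simp [show n - k = n - (k + 1) + 1 by omega, iteratedPrimitive]

section Kernel

variable {a b x : ℝ} {p : ℝ → ℝ} {k : ℕ}

lemma rk_succ_eqOn (hk : IntervalIntegrable (rk a b x p k) volume a b) :
    EqOn (rk a b x p (k + 1)) (fun s => (∫ t in s..b, rk a b x p k t) -
      {t | t ≤ x}.indicator (fun _ => ∫ t in a..b, rk a b x p k t) s) (Icc a b) := by
  intro s hs
  by_cases hsx : s ≤ x
  · have hs' : s ∈ uIcc a b := Icc_subset_uIcc hs
    have := integral_add_adjacent_intervals (hk.mono_set (uIcc_subset_uIcc_left hs'))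
      (hk.mono_set (uIcc_subset_uIcc_right hs'))
    simp only [rk, hsx, if_true, mem_ofPred_eq, indicator_of_mem]
    linarith
  · simp [rk, hsx]

lemma intervalIntegrable_rk (hx : x ∈ Icc a b) (hp : IntervalIntegrable p volume a b) :
    ∀ k, IntervalIntegrable (rk a b x p k) volume a b
  | 0 => hp
  | k + 1 => by
    have hk := intervalIntegrable_rk hx hp k
    have hab : a ≤ b := hx.1.trans hx.2
    refine (intervalIntegrable_congr ((rk_succ_eqOn hk).mono ?_)).2 ?_
    · rw [uIoc_of_le hab]; exact Ioc_subset_Icc_self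
    · exact hk.continuousOn_integral_tail.intervalIntegrable.sub
        intervalIntegrable_const.indicator_setOf_le

lemma exists_abs_rk_succ_le (hx : x ∈ Icc a b) (hp : IntervalIntegrable p volume a b) (k : ℕ) :
    ∃ M, ∀ s ∈ Icc a b, |rk a b x p (k + 1) s| ≤ M := by
  have hk := intervalIntegrable_rk hx hp k
  have hab : a ≤ b := hx.1.trans hx.2
  obtain ⟨M, hM⟩ := isCompact_Icc.exists_bound_of_continuousOn
    (uIcc_of_le hab ▸ hk.continuousOn_integral_tail)
  refine ⟨M + |∫ t in a..b, rk a b x p k t|, fun s hs => ?_⟩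
  rw [rk_succ_eqOn hk hs]
  refine (abs_sub _ _).trans (add_le_add (hM s hs) ?_)
  by_cases hsx : s ≤ x <;> simp [hsx]

lemma rk_succ_mul_eqOn (hk : IntervalIntegrable (rk a b x p k) volume a b) (g : ℝ → ℝ) :
    EqOn (fun t => rk a b x p (k + 1) t * g t) (fun t => (∫ s in t..b, rk a b x p k s) * g t -
      {t | t ≤ x}.indicator (fun t => (∫ s in a..b, rk a b x p k s) * g t) t) (Icc a b) := by
  intro t ht
  by_cases htx : t ≤ x <;> simp [rk_succ_eqOn hk ht, htx, sub_mul]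

lemma integral_rk_succ_mul (hx : x ∈ Icc a b) (hp : IntervalIntegrable p volume a b)
    {g : ℝ → ℝ} (hg : IntervalIntegrable g volume a b) :
    ∫ t in a..b, rk a b x p (k + 1) t * g t = (∫ t in a..b, (∫ s in t..b, rk a b x p k s) * g t) -
      (∫ s in a..b, rk a b x p k s) * ∫ t in a..x, g t := by
  have hk := intervalIntegrable_rk hx hp k
  have hab : a ≤ b := hx.1.trans hx.2
  rw [integral_congr ((rk_succ_mul_eqOn hk g).mono (uIcc_of_le hab).subset),
    integral_sub (hg.continuousOn_mul hk.continuousOn_integral_tail)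
      (hg.const_mul _).indicator_setOf_le,
    intervalIntegral.integral_indicator hx, intervalIntegral.integral_const_mul]

lemma integral_rk_mul_eq (hx : x ∈ Icc a b) (hp : IntervalIntegrable p volume a b) (k : ℕ)
    {h g : ℝ → ℝ} (hg : IntervalIntegrable g volume a b)
    (hh : ∀ y ∈ Icc a b, h y = h a + ∫ t in a..y, g t) :
    ∫ s in a..b, rk a b x p k s * h s =
      (∫ s in a..b, rk a b x p k s) * h x + ∫ t in a..b, rk a b x p (k + 1) t * g t := by
  have hk := intervalIntegrable_rk hx hp k
  have hab : a ≤ b := hx.1.trans hx.2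
  have hG : ContinuousOn (fun s => ∫ t in a..s, g t) (uIcc a b) :=
    continuousOn_primitive_interval' hg left_mem_uIcc
  calc ∫ s in a..b, rk a b x p k s * h s
      = ∫ s in a..b, (h a * rk a b x p k s + rk a b x p k s * ∫ t in a..s, g t) :=
        integral_congr fun s hs => by
          rw [hh s (uIcc_of_le hab ▸ hs)]; ring
    _ = h a * (∫ s in a..b, rk a b x p k s) +
          ∫ t in a..b, (∫ s in t..b, rk a b x p k s) * g t := by
        rw [integral_add (hk.const_mul _) (hk.mul_continuousOn hG),
          intervalIntegral.integral_const_mul,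
          integral_mul_primitive_eq_integral_tail_mul hab hk hg]
    _ = _ := by
        rw [integral_rk_succ_mul hx hp hg, hh x hx]; ring

lemma integral_rk_mul_pow (hx : x ∈ Icc a b) (hp : IntervalIntegrable p volume a b) :
    ∀ d k, ∫ s in a..b, rk a b x p k s * (s - x) ^ d =
      d.factorial * ∫ s in a..b, rk a b x p (k + d) s
  | 0, k => by simp
  | d + 1, k => by
    have hpow : ∀ y, (y - x) ^ (d + 1) =
        (a - x) ^ (d + 1) + ∫ t in a..y, (d + 1 : ℝ) * (t - x) ^ d := fun y => by
        rw [intervalIntegral.integral_const_mul, integral_comp_sub_right (· ^ d), integral_pow]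
        field_simp
        ring
    rw [integral_rk_mul_eq hx hp k (g := fun t => (d + 1 : ℝ) * (t - x) ^ d)
      ((by fun_prop : Continuous fun t => (d + 1 : ℝ) * (t - x) ^ d).intervalIntegrable a b)
      fun y _ => hpow y]
    simp_rw [sub_self, zero_pow d.succ_ne_zero, mul_zero, zero_add, mul_left_comm _ (d + 1 : ℝ),
      intervalIntegral.integral_const_mul, integral_rk_mul_pow hx hp d (k + 1),
      Nat.factorial_succ, add_right_comm k 1 d, ← add_assoc]
    push_cast
    ring

lemma integral_rk_mul_eq_sub_sum (hx : x ∈ Icc a b) (hp : IntervalIntegrable p volume a b)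
    {n : ℕ} {fd : ℕ → ℝ → ℝ} (hfd : ∀ k < n, IntervalIntegrable (fd (k + 1)) volume a b)
    (hAC : ∀ k < n, ∀ y ∈ Icc a b, fd k y = fd k a + ∫ t in a..y, fd (k + 1) t) :
    ∫ t in a..b, rk a b x p n t * fd n t =
      (∫ t in a..b, p t * fd 0 t) -
        ∑ k ∈ Finset.range n, (∫ s in a..b, rk a b x p k s) * fd k x := by
  induction n with
  | zero => simp [rk]
  | succ n ih =>
    rw [Finset.sum_range_succ, sub_add_eq_sub_sub,
      ← ih (fun k hk => hfd k (by omega)) (fun k hk => hAC k (by omega)),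
      integral_rk_mul_eq hx hp n (hfd n n.lt_succ_self) (hAC n n.lt_succ_self)]
    ring

lemma integral_mul_pow_eq_factorial_mul_integral_rk (hx : x ∈ Icc a b)
    (hp : IntervalIntegrable p volume a b) (k : ℕ) :
    ∫ t in a..b, p t * (t - x) ^ k = k.factorial * ∫ t in a..b, rk a b x p k t := by
  simpa [rk] using integral_rk_mul_pow hx hp k 0

lemma integral_mul_sub_taylor_eq_integral_rk_mul (hx : x ∈ Icc a b)
    (hp : IntervalIntegrable p volume a b) {n : ℕ} {fd : ℕ → ℝ → ℝ}
    (hfd : ∀ k < n, IntervalIntegrable (fd (k + 1)) volume a b)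
    (hAC : ∀ k < n, ∀ y ∈ Icc a b, fd k y = fd k a + ∫ t in a..y, fd (k + 1) t) :
    (∫ t in a..b, p t * fd 0 t) - ∑ k ∈ Finset.range n,
        (1 / (k.factorial : ℝ)) * (∫ t in a..b, p t * (t - x) ^ k) * fd k x =
      ∫ t in a..b, rk a b x p n t * fd n t := by
  rw [integral_rk_mul_eq_sub_sum hx hp hfd hAC]
  congr 1
  refine Finset.sum_congr rfl fun k _ => ?_
  rw [integral_mul_pow_eq_factorial_mul_integral_rk hx hp]
  field_simp

end Kernel

theorem stmt8_general (a b : ℝ) (n : ℕ) (hn : 1 ≤ n)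
    (q q' : ℝ≥0∞) (hqq' : 1 / q + 1 / q' = 1)
    (p : ℝ → ℝ) (hp : IntervalIntegrable p volume a b)
    (x : ℝ) (hx : x ∈ Set.Icc a b) :
    sSup {v : ℝ | ∃ f : ℝ → ℝ, ∃ fd : ℕ → ℝ → ℝ, fd 0 = f ∧
        (∀ k < n, IntervalIntegrable (fd (k + 1)) volume a b) ∧
        (∀ k < n, ∀ y ∈ Set.Icc a b, fd k y = fd k a + ∫ t in a..y, fd (k + 1) t) ∧
        eLpNorm (fd n) q (volume.restrict (Set.Icc a b)) ≤ 1 ∧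
        v = |(∫ t in a..b, p t * f t)
              - ∑ k ∈ Finset.range n,
                  (1 / (Nat.factorial k : ℝ)) * (∫ t in a..b, p t * (t - x) ^ k) * fd k x|}
      = (eLpNorm (rk a b x p n) q' (volume.restrict (Set.Icc a b))).toReal := by
  have hab : a ≤ b := hx.1.trans hx.2
  have : HolderConjugate q q' := holderConjugate_iff.2 (by simpa only [one_div] using hqq')
  have hIcc : ∀ g : ℝ → ℝ, IntervalIntegrable g volume a b ↔ IntegrableOn g (Icc a b) :=
    fun g => intervalIntegrable_iff_integrableOn_Icc_of_le hab
  have hint : ∀ g : ℝ → ℝ, ∫ t in a..b, g t = ∫ t in Icc a b, g t := fun g => by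
    rw [integral_of_le hab, integral_Icc_eq_integral_Ioc]
  obtain ⟨m, rfl⟩ : ∃ m, n = m + 1 := ⟨n - 1, by omega⟩
  obtain ⟨M, hM⟩ := exists_abs_rk_succ_le hx hp m
  refine (congrArg sSup (Set.ext fun v => ?_)).trans (sSup_abs_integral_mul_eq_eLpNorm (q := q)
    ((hIcc _).1 (intervalIntegrable_rk hx hp _)).aestronglyMeasurable
    ((ae_restrict_iff' measurableSet_Icc).2 (.of_forall hM)))
  constructor
  · rintro ⟨f, fd, rfl, hfd, hAC, hnorm, rfl⟩
    refine ⟨fd (m + 1), ((hIcc _).1 (hfd m m.lt_succ_self)).aestronglyMeasurable, hnorm, ?_⟩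
    rw [integral_mul_sub_taylor_eq_integral_rk_mul hx hp hfd hAC, hint]
  · rintro ⟨g, hg, hnorm, rfl⟩
    have hgI : IntervalIntegrable g volume a b :=
      (hIcc g).2 (MemLp.integrable (HolderConjugate.one_le q q') ⟨hg, hnorm.trans_lt one_lt_top⟩)
    obtain ⟨fd, hfd, hAC, rfl⟩ := exists_iteratedDerivs_of_intervalIntegrable hgI (m + 1)
    refine ⟨_, fd, rfl, hfd, fun k hk y _ => hAC k hk y, hnorm, ?_⟩
    rw [integral_mul_sub_taylor_eq_integral_rk_mul hx hp hfd fun k hk y _ => hAC k hk y, hint]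

/-- Sharp Ostrowski-type inequality for the class `W^n_q[a,b]` (functions with
`f^{(n−1)}` absolutely continuous and `‖f^{(n)}‖_{L_q} ≤ 1`): the supremum of the
deviation `|∫ p f − Σ_{k<n} (1/k!)(∫ p(t)(t−x)^k dt) f^{(k)}(x)|` over the class equals
`‖r_x^n‖_{L_{q'}[a,b]}`, where `1/q + 1/q' = 1`. -/
theorem stmt8 (a b : ℝ) (hab : a < b) (n : ℕ) (hn : 1 ≤ n)
    (q q' : ℝ≥0∞) (hq : 1 ≤ q) (hqq' : 1 / q + 1 / q' = 1)
    (p : ℝ → ℝ) (hp : IntervalIntegrable p volume a b)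
    (x : ℝ) (hx : x ∈ Set.Icc a b) :
    sSup {v : ℝ | ∃ f : ℝ → ℝ, ∃ fd : ℕ → ℝ → ℝ, fd 0 = f ∧
        (∀ k < n, IntervalIntegrable (fd (k + 1)) volume a b) ∧
        (∀ k < n, ∀ y ∈ Set.Icc a b, fd k y = fd k a + ∫ t in a..y, fd (k + 1) t) ∧
        eLpNorm (fd n) q (volume.restrict (Set.Icc a b)) ≤ 1 ∧
        v = |(∫ t in a..b, p t * f t)
              - ∑ k ∈ Finset.range n,
                  (1 / (Nat.factorial k : ℝ)) * (∫ t in a..b, p t * (t - x) ^ k) * fd k x|}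
      = (eLpNorm (rk a b x p n) q' (volume.restrict (Set.Icc a b))).toReal :=
  stmt8_general a b n hn q q' hqq' p hp x hx
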